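/- Subject reduction holds for core NMIFC: if Γ; pc ⊢ e : τ and the configuration ⟨e, t⟩ steps to ⟨e', t'⟩ under the operational semantics, then Γ; pc ⊢ e' : τ. -/
import Mathlib


/-! # Core NMIFC

Labels are FLAM labels in normal form `p^→ ∧ q^←`, modeled as a pair of a
confidentiality component and an integrity component drawn from a lattice `B`
of (formulas over) atomic principals, ordered by the trust (acts-for) order
(`conj = ⊔`, `disj = ⊓`). -/

/-- A FLAM label: confidentiality component and integrity component. -/
structure Lbl (B : Type) where
  conf : B
  integ : B

variable {B : Type}

/-- The information-flow ordering `ℓ ⊑ ℓ'`: confidentiality may only grow,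
integrity may only shrink (in the trust order on `B`). -/
def Flows [Lattice B] (ℓ ℓ' : Lbl B) : Prop :=
  ℓ.conf ≤ ℓ'.conf ∧ ℓ'.integ ≤ ℓ.integ

/-- Join `ℓ ⊔ ℓ'` in the information-flow ordering. -/
def Lbl.join [Lattice B] (ℓ ℓ' : Lbl B) : Lbl B :=
  ⟨ℓ.conf ⊔ ℓ'.conf, ℓ.integ ⊓ ℓ'.integ⟩

/-- NMIFC types: unit, pc-annotated functions, and monadic types `ℓ says τ`. -/
inductive Ty (B : Type) where
  | unit : Ty B
  | fn : Ty B → Lbl B → Ty B → Ty B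
  | says : Lbl B → Ty B → Ty B

/-- NMIFC expressions (de Bruijn indices): variables, unit, pc-annotated
lambdas, application, monadic unit `η_ℓ e` (source) and `η̄_ℓ v` (runtime),
bind, declassification, and endorsement. -/
inductive Exp (B : Type) where
  | var : ℕ → Exp B
  | unit : Exp B
  | lam : Ty B → Lbl B → Exp B → Exp B
  | app : Exp B → Exp B → Exp B
  | etaE : Lbl B → Exp B → Exp B
  | etaV : Lbl B → Exp B → Exp B
  | bind : Exp B → Exp B → Exp B
  | decl : Exp B → Lbl B → Exp B
  | endo : Exp B → Lbl B → Exp B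

/-- Values: `()`, lambdas, and protected values `η̄_ℓ v`. -/
inductive IsValue {B : Type} : Exp B → Prop
  | unit : IsValue .unit
  | lam {τ : Ty B} {pc : Lbl B} {e : Exp B} : IsValue (.lam τ pc e)
  | etaV {ℓ : Lbl B} {v : Exp B} : IsValue v → IsValue (.etaV ℓ v)

/-- Shift free de Bruijn indices `≥ c` up by one. -/
def shiftUp : ℕ → Exp B → Exp B
  | c, .var n => if n < c then .var n else .var (n + 1)
  | _, .unit => .unit
  | c, .lam τ pc e => .lam τ pc (shiftUp (c + 1) e)
  | c, .app e₁ e₂ => .app (shiftUp c e₁) (shiftUp c e₂)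
  | c, .etaE ℓ e => .etaE ℓ (shiftUp c e)
  | c, .etaV ℓ e => .etaV ℓ (shiftUp c e)
  | c, .bind e₁ e₂ => .bind (shiftUp c e₁) (shiftUp (c + 1) e₂)
  | c, .decl e ℓ => .decl (shiftUp c e) ℓ
  | c, .endo e ℓ => .endo (shiftUp c e) ℓ

/-- Capture-avoiding substitution `e[x_j ↦ s]` for de Bruijn index `j`. -/
def subst : ℕ → Exp B → Exp B → Exp B
  | j, s, .var n => if n < j then .var n else if n = j then s else .var (n - 1)
  | _, _, .unit => .unit
  | j, s, .lam τ pc e => .lam τ pc (subst (j + 1) (shiftUp 0 s) e)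
  | j, s, .app e₁ e₂ => .app (subst j s e₁) (subst j s e₂)
  | j, s, .etaE ℓ e => .etaE ℓ (subst j s e)
  | j, s, .etaV ℓ e => .etaV ℓ (subst j s e)
  | j, s, .bind e₁ e₂ => .bind (subst j s e₁) (subst (j + 1) (shiftUp 0 s) e₂)
  | j, s, .decl e ℓ => .decl (subst j s e) ℓ
  | j, s, .endo e ℓ => .endo (subst j s e) ℓ

/-- The protection relation `ℓ ⊑ τ`: a type protects label `ℓ`. -/
inductive Protects [Lattice B] (ℓ : Lbl B) : Ty B → Prop
  | unit : Protects ℓ .unit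
  | says {ℓ' : Lbl B} {τ : Ty B} : Flows ℓ ℓ' → Protects ℓ (.says ℓ' τ)

/-- The NMIFC typing judgment `Γ; pc ⊢ e : τ`, with rules Var, Unit, Lam, App,
UnitM, VUnitM, BindM, Decl, and Endorse.  The Decl robustness premise
`ℓ'^→ ⊑ ℓ^→ ⊔ ∇̃((ℓ' ⊔ pc)^←)` and the Endorse transparency premise
`ℓ'^← ⊑ ℓ^← ⊔ ∇((ℓ' ⊔ pc)^→)` are expressed componentwise via view/voice. -/
inductive HasType [Lattice B] : List (Ty B) → Lbl B → Exp B → Ty B → Prop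
  | var {Γ : List (Ty B)} {pc : Lbl B} {n : ℕ} {τ : Ty B} :
      Γ[n]? = some τ → HasType Γ pc (.var n) τ
  | unit {Γ : List (Ty B)} {pc : Lbl B} : HasType Γ pc .unit .unit
  | lam {Γ : List (Ty B)} {pc pc' : Lbl B} {τ₁ τ₂ : Ty B} {e : Exp B} :
      HasType (τ₁ :: Γ) pc' e τ₂ →
      HasType Γ pc (.lam τ₁ pc' e) (.fn τ₁ pc' τ₂)
  | app {Γ : List (Ty B)} {pc pc' : Lbl B} {τ' τ : Ty B} {e₁ e₂ : Exp B} :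
      HasType Γ pc e₁ (.fn τ' pc' τ) → HasType Γ pc e₂ τ' →
      Flows pc pc' → HasType Γ pc (.app e₁ e₂) τ
  | unitM {Γ : List (Ty B)} {pc ℓ : Lbl B} {τ : Ty B} {e : Exp B} :
      HasType Γ pc e τ → Flows pc ℓ →
      HasType Γ pc (.etaE ℓ e) (.says ℓ τ)
  | vUnitM {Γ : List (Ty B)} {pc ℓ : Lbl B} {τ : Ty B} {v : Exp B} :
      IsValue v → HasType Γ pc v τ →
      HasType Γ pc (.etaV ℓ v) (.says ℓ τ)
  | bindM {Γ : List (Ty B)} {pc ℓ : Lbl B} {τ' τ : Ty B} {e e' : Exp B} :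
      HasType Γ pc e (.says ℓ τ') → Protects ℓ τ →
      HasType (τ' :: Γ) (pc.join ℓ) e' τ →
      HasType Γ pc (.bind e e') τ
  | decl {Γ : List (Ty B)} {pc ℓ' ℓ : Lbl B} {τ : Ty B} {e : Exp B} :
      HasType Γ pc e (.says ℓ' τ) →
      ℓ'.integ = ℓ.integ →
      Flows pc ℓ →
      ℓ'.conf ≤ ℓ.conf ⊔ (ℓ'.integ ⊓ pc.integ) →
      HasType Γ pc (.decl e ℓ) (.says ℓ τ)
  | endo {Γ : List (Ty B)} {pc ℓ' ℓ : Lbl B} {τ : Ty B} {e : Exp B} :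
      HasType Γ pc e (.says ℓ' τ) →
      ℓ'.conf = ℓ.conf →
      Flows pc ℓ →
      ℓ.integ ⊓ (ℓ'.conf ⊔ pc.conf) ≤ ℓ'.integ →
      HasType Γ pc (.endo e ℓ) (.says ℓ τ)

/-- Trace events: the silent event `•`, protected-value events `⟨η̄_ℓ v⟩`,
and downgrade events (`π = true` for declassify `→`, `false` for endorse `←`). -/
inductive Event (B : Type) where
  | silent : Event B
  | ret : Lbl B → Exp B → Event B
  | down : Bool → Lbl B → Lbl B → Exp B → Event B

/-- Small-step operational semantics on configurations `⟨e, t⟩`: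
E-App and E-BindM are β/bind reductions (emitting `•` via E-Step),
E-UnitM evaluates `η_ℓ v` to `η̄_ℓ v` emitting a protection event,
E-Decl and E-Endorse downgrade fully-evaluated `η̄` values emitting downgrade
events, and the remaining rules step under evaluation contexts (E-Eval). -/
inductive Step [Lattice B] : Exp B → List (Event B) → Exp B → List (Event B) → Prop
  | app {τ : Ty B} {pc : Lbl B} {e v : Exp B} {t : List (Event B)} :
      IsValue v →
      Step (.app (.lam τ pc e) v) t (subst 0 v e) (t ++ [.silent])
  | bindM {ℓ : Lbl B} {v e : Exp B} {t : List (Event B)} :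
      IsValue v →
      Step (.bind (.etaV ℓ v) e) t (subst 0 v e) (t ++ [.silent])
  | unitM {ℓ : Lbl B} {v : Exp B} {t : List (Event B)} :
      IsValue v →
      Step (.etaE ℓ v) t (.etaV ℓ v) (t ++ [.ret ℓ v])
  | decl {ℓ' ℓ : Lbl B} {v : Exp B} {t : List (Event B)} :
      IsValue v →
      Step (.decl (.etaV ℓ' v) ℓ) t (.etaV ℓ v) (t ++ [.down true ℓ' ℓ v])
  | endo {ℓ' ℓ : Lbl B} {v : Exp B} {t : List (Event B)} :
      IsValue v →
      Step (.endo (.etaV ℓ' v) ℓ) t (.etaV ℓ v) (t ++ [.down false ℓ' ℓ v])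
  | appL {e₁ e₁' e₂ : Exp B} {t t' : List (Event B)} :
      Step e₁ t e₁' t' → Step (.app e₁ e₂) t (.app e₁' e₂) t'
  | appR {v e e' : Exp B} {t t' : List (Event B)} :
      IsValue v → Step e t e' t' → Step (.app v e) t (.app v e') t'
  | etaCtx {ℓ : Lbl B} {e e' : Exp B} {t t' : List (Event B)} :
      Step e t e' t' → Step (.etaE ℓ e) t (.etaE ℓ e') t'
  | bindCtx {e e' e₂ : Exp B} {t t' : List (Event B)} :
      Step e t e' t' → Step (.bind e e₂) t (.bind e' e₂) t'
  | declCtx {ℓ : Lbl B} {e e' : Exp B} {t t' : List (Event B)} :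
      Step e t e' t' → Step (.decl e ℓ) t (.decl e' ℓ) t'
  | endoCtx {ℓ : Lbl B} {e e' : Exp B} {t t' : List (Event B)} :
      Step e t e' t' → Step (.endo e ℓ) t (.endo e' ℓ) t'


theorem IsValue.shiftUpVal {v : Exp B} (hv : IsValue v) : ∀ c, IsValue (shiftUp c v) := by
  induction hv with
  | unit => intro _; exact .unit
  | lam => intro _; exact .lam
  | etaV _ ih => intro c; exact .etaV (ih c)

theorem Flows.trans' [Lattice B] {a b c : Lbl B} (h : Flows a b) (h' : Flows b c) :
    Flows a c := ⟨h.1.trans h'.1, h'.2.trans h.2⟩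

/-- pc-reduction: typing is preserved by lowering the pc. -/
theorem pc_red [Lattice B] {Γ : List (Ty B)} {pc' : Lbl B} {e : Exp B} {τ : Ty B}
    (h : HasType Γ pc' e τ) : ∀ {pc : Lbl B}, Flows pc pc' → HasType Γ pc e τ := by
  induction h with
  | var h => exact fun _ => .var h
  | unit => exact fun _ => .unit
  | lam _ ih => exact fun _ => .lam (ih ⟨le_rfl, le_rfl⟩)
  | app h₁ h₂ hf ih₁ ih₂ => exact fun hp => .app (ih₁ hp) (ih₂ hp) (hp.trans' hf)
  | unitM h hf ih => exact fun hp => .unitM (ih hp) (hp.trans' hf)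
  | vUnitM hv h ih => exact fun hp => .vUnitM hv (ih hp)
  | bindM h₁ hprot h₂ ih₁ ih₂ =>
      intro pc hp
      exact .bindM (ih₁ hp) hprot
        (ih₂ ⟨sup_le_sup_right hp.1 _, inf_le_inf_right _ hp.2⟩)
  | decl h heq hf hr ih =>
      intro pc hp
      exact .decl (ih hp) heq (hp.trans' hf)
        (hr.trans (sup_le_sup_left (inf_le_inf_left _ hp.2) _))
  | endo h heq hf hr ih =>
      intro pc hp
      exact .endo (ih hp) heq (hp.trans' hf)
        ((inf_le_inf_left _ (sup_le_sup_left hp.1 _)).trans hr)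

/-- Values can be typed at any pc. -/
theorem value_any_pc [Lattice B] {v : Exp B} (hv : IsValue v) :
    ∀ {Γ : List (Ty B)} {pc pc' : Lbl B} {τ : Ty B},
      HasType Γ pc v τ → HasType Γ pc' v τ := by
  induction hv with
  | unit => intro _ _ _ _ h; cases h; exact .unit
  | lam => intro _ _ _ _ h; cases h with | lam hb => exact .lam hb
  | etaV hv ih => intro _ _ _ _ h; cases h with | vUnitM hv' hb => exact .vUnitM hv' (ih hb)

/-- Weakening. -/
theorem weaken [Lattice B] {Γ : List (Ty B)} {pc : Lbl B} {e : Exp B} {τ : Ty B}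
    (h : HasType Γ pc e τ) :
    ∀ {Γ₁ Γ₂ : List (Ty B)} {σ : Ty B}, Γ = Γ₁ ++ Γ₂ →
      HasType (Γ₁ ++ σ :: Γ₂) pc (shiftUp Γ₁.length e) τ := by
  induction h with
  | @var _ _ n τ h =>
      intro Γ₁ Γ₂ σ hΓ
      subst hΓ
      simp only [shiftUp]
      split
      · apply HasType.var
        rename_i hn
        rw [List.getElem?_append_left hn] at h ⊢
        exact h
      · rename_i hn
        push_neg at hn
        apply HasType.var
        rw [List.getElem?_append_right (by omega)]
        rw [List.getElem?_append_right hn] at h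
        have : n + 1 - Γ₁.length = (n - Γ₁.length) + 1 := by omega
        rw [this]
        simpa using h
  | unit => intro _ _ _ _; exact .unit
  | lam _ ih =>
      intro Γ₁ Γ₂ σ hΓ
      exact .lam (ih (Γ₁ := _ :: Γ₁) (by rw [hΓ]; rfl))
  | app _ _ hf ih₁ ih₂ => intro _ _ _ hΓ; exact .app (ih₁ hΓ) (ih₂ hΓ) hf
  | unitM _ hf ih => intro _ _ _ hΓ; exact .unitM (ih hΓ) hf
  | @vUnitM _ _ _ _ v hv h ih =>
      intro Γ₁ Γ₂ σ hΓ
      exact .vUnitM (hv.shiftUpVal _) (ih hΓ)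
  | bindM _ hprot _ ih₁ ih₂ =>
      intro Γ₁ Γ₂ σ hΓ
      exact .bindM (ih₁ hΓ) hprot (ih₂ (Γ₁ := _ :: Γ₁) (by rw [hΓ]; rfl))
  | decl _ heq hf hr ih => intro _ _ _ hΓ; exact .decl (ih hΓ) heq hf hr
  | endo _ heq hf hr ih => intro _ _ _ hΓ; exact .endo (ih hΓ) heq hf hr

/-- Substitution lemma. -/
theorem subst_pres [Lattice B] {Γ : List (Ty B)} {pc : Lbl B} {e : Exp B} {τ : Ty B}
    (h : HasType Γ pc e τ) :
    ∀ {Γ₁ Γ₂ : List (Ty B)} {τ' : Ty B} {s : Exp B}, Γ = Γ₁ ++ τ' :: Γ₂ →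
      (∀ pc', HasType (Γ₁ ++ Γ₂) pc' s τ') →
      HasType (Γ₁ ++ Γ₂) pc (subst Γ₁.length s e) τ := by
  induction h with
  | @var _ pc n τ h =>
      intro Γ₁ Γ₂ τ' s hΓ hs
      subst hΓ
      simp only [subst]
      split
      · apply HasType.var
        rename_i hn
        rw [List.getElem?_append_left hn] at h ⊢
        exact h
      · rename_i hn
        push_neg at hn
        split
        · rename_i hne
          subst hne
          rw [List.getElem?_append_right le_rfl] at h
          simp at h
          subst h
          exact hs pc
        · rename_i hne
          have hgt : Γ₁.length < n := by omega
          apply HasType.var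
          rw [List.getElem?_append_right (by omega)]
          rw [List.getElem?_append_right hn] at h
          have : n - Γ₁.length = (n - 1 - Γ₁.length) + 1 := by omega
          rw [this] at h
          simp at h
          have : n - 1 - Γ₁.length = n - 1 - Γ₁.length := rfl
          simpa using h
  | unit => intro _ _ _ _ _ _; exact .unit
  | lam _ ih =>
      intro Γ₁ Γ₂ τ' s hΓ hs
      exact .lam (ih (Γ₁ := _ :: Γ₁) (by rw [hΓ]; rfl)
        (fun pc' => weaken (hs pc') (Γ₁ := []) rfl))
  | app _ _ hf ih₁ ih₂ => intro _ _ _ _ hΓ hs; exact .app (ih₁ hΓ hs) (ih₂ hΓ hs) hf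
  | unitM _ hf ih => intro _ _ _ _ hΓ hs; exact .unitM (ih hΓ hs) hf
  | @vUnitM _ _ _ _ v hv h ih =>
      intro Γ₁ Γ₂ τ' s hΓ hs
      have hv' : ∀ (j : ℕ) (s : Exp B), IsValue (subst j s v) := by
        clear h ih hΓ hs
        induction hv with
        | unit => intro _ _; exact .unit
        | lam => intro _ _; exact .lam
        | etaV _ ih => intro j s; exact .etaV (ih j s)
      exact .vUnitM (hv' _ _) (ih hΓ hs)
  | bindM _ hprot _ ih₁ ih₂ =>
      intro Γ₁ Γ₂ τ' s hΓ hs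
      exact .bindM (ih₁ hΓ hs) hprot (ih₂ (Γ₁ := _ :: Γ₁) (by rw [hΓ]; rfl)
        (fun pc' => weaken (hs pc') (Γ₁ := []) rfl))
  | decl _ heq hf hr ih => intro _ _ _ _ hΓ hs; exact .decl (ih hΓ hs) heq hf hr
  | endo _ heq hf hr ih => intro _ _ _ _ hΓ hs; exact .endo (ih hΓ hs) heq hf hr

/-- Subject reduction for core NMIFC: if `Γ; pc ⊢ e : τ` and the configuration
`⟨e, t⟩` steps to `⟨e', t'⟩`, then `Γ; pc ⊢ e' : τ`. -/
theorem subject_reduction [Lattice B]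
    {Γ : List (Ty B)} {pc : Lbl B} {e e' : Exp B} {τ : Ty B}
    {t t' : List (Event B)}
    (ht : HasType Γ pc e τ) (hs : Step e t e' t') :
    HasType Γ pc e' τ := by

  induction hs generalizing τ with
  | app hv =>
      cases ht with
      | app h₁ h₂ hf =>
        cases h₁ with
        | lam hb =>
          exact subst_pres (pc_red hb hf) (Γ₁ := []) rfl
            (fun pc' => value_any_pc hv h₂)
  | bindM hv =>
      cases ht with
      | bindM h₁ hprot h₂ =>
        cases h₁ with
        | vUnitM hv' hb =>
          exact subst_pres (pc_red h₂ ⟨le_sup_left, inf_le_left⟩) (Γ₁ := []) rfl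
            (fun pc' => value_any_pc hv hb)
  | unitM hv =>
      cases ht with
      | unitM h hf => exact .vUnitM hv h
  | decl hv =>
      cases ht with
      | decl h heq hf hr =>
        cases h with
        | vUnitM hv' hb => exact .vUnitM hv' hb
  | endo hv =>
      cases ht with
      | endo h heq hf hr =>
        cases h with
        | vUnitM hv' hb => exact .vUnitM hv' hb
  | appL _ ih =>
      cases ht with
      | app h₁ h₂ hf => exact .app (ih h₁) h₂ hf
  | appR hv _ ih =>
      cases ht with
      | app h₁ h₂ hf => exact .app h₁ (ih h₂) hf
  | etaCtx _ ih =>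
      cases ht with
      | unitM h hf => exact .unitM (ih h) hf
  | bindCtx _ ih =>
      cases ht with
      | bindM h₁ hprot h₂ => exact .bindM (ih h₁) hprot h₂
  | declCtx _ ih =>
      cases ht with
      | decl h heq hf hr => exact .decl (ih h) heq hf hr
  | endoCtx _ ih =>
      cases ht with
      | endo h heq hf hr => exact .endo (ih h) heq hf hr
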